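/- Let m ≥ 1, let γ ∈ (0,1), and let f : [0,1]^m → ℝ be Lebesgue integrable. Suppose that ∫_{A₁×⋯×A_m} f dλ^m = 0 for all m-tuples A₁,…,A_m of Lebesgue-measurable subsets of [0,1] with λ(A₁) = ⋯ = λ(A_m) = γ. Then f = 0 almost everywhere on [0,1]^m. Moreover, if γ < 1/m, the same conclusion holds if the hypothesis is only assumed for m-tuples of pairwise disjoint such sets. -/

import Mathlib

/-!
Fix every side of the box but the `i`-th. By Fubini, `B ↦ ∫_{A₁ × ⋯ × B × ⋯ × A_m} f` is
`B ↦ ∫_B g` for an integrable marginal `g`, and the hypothesis says `∫_B g = 0` whenever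
`B ⊆ E` and `λ(B) = γ`, where `E ⊇ A_i` has measure `> γ`. Completing two disjoint sets
`S, T ⊆ E` of equal small measure by a common `C` to measure `γ` gives `∫_S g = ∫_T g`;
taking `S ⊆ {g < c}` and `T ⊆ {g ≥ c}` shows that every `{g < c}` is null or conull in `E`,
so `g` is a.e. constant on `E`, and the constant is `0`. Freeing the sides one at a time, the
integral of `f` over every product of measurable subsets of the cube vanishes, and a π-λ
argument gives `f = 0` a.e.

In the disjoint case the `i`-th side is freed inside `[0,1]` minus the other sides, which
still has measure `> γ` because `mγ < 1`. This handles boxes with pairwise disjoint sides of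
measure `≤ γ`; such boxes cover the cube up to the null set of points with a repeated or a
boundary coordinate.
-/
open MeasureTheory Set Filter Topology Metric
open scoped ENNReal

theorem exists_subset_measure_eq {μ : Measure ℝ} [NullSingletonClass μ] {s : Set ℝ}
    {a b : ℝ} (hs : MeasurableSet s) (hsab : s ⊆ Icc a b) (hμs : μ s ≠ ∞) {r : ℝ≥0∞}
    (hr : r ≤ μ s) : ∃ t ⊆ s, MeasurableSet t ∧ μ t = r := by
  have : IsFiniteMeasure (μ.restrict s) := isFiniteMeasure_restrict.2 hμs
  -- `x ↦ μ (s ∩ Ioc (a - 1) x)` is continuous, being a primitive for an atomless measure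
  set F : ℝ → ℝ := fun x => ∫ _ in (a - 1)..x, (1 : ℝ) ∂μ.restrict s
  have hF : ∀ x, a - 1 ≤ x → F x = μ.real (s ∩ Ioc (a - 1) x) := fun x hx => by
    simp [F, intervalIntegral.integral_const', Ioc_eq_empty_of_le hx,
      measureReal_restrict_apply measurableSet_Ioc, inter_comm]
  set b' := max b (a - 1)
  have hFb' : F b' = μ.real s := by
    have hsub : s ⊆ Ioc (a - 1) b' := fun x hx =>
      ⟨by linarith [(hsab hx).1], (hsab hx).2.trans (le_max_left _ _)⟩
    rw [hF b' (le_max_right _ _), inter_eq_left.2 hsub]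
  have hFa : F (a - 1) = 0 := intervalIntegral.integral_same
  obtain ⟨x, hx, hFx⟩ := intermediate_value_Icc (le_max_right b (a - 1))
    ((integrable_const (1 : ℝ)).continuous_primitive (a - 1)).continuousOn
    (show r.toReal ∈ Icc (F (a - 1)) (F b') from
      ⟨hFa ▸ ENNReal.toReal_nonneg, hFb' ▸ ENNReal.toReal_mono hμs hr⟩)
  refine ⟨s ∩ Ioc (a - 1) x, inter_subset_left, hs.inter measurableSet_Ioc, ?_⟩
  change F x = _ at hFx
  rw [hF x hx.1, measureReal_def, ENNReal.toReal_eq_toReal_iff'] at hFx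
  · exact hFx
  · exact (measure_mono inter_subset_left).trans_lt hμs.lt_top |>.ne
  · exact (hr.trans_lt hμs.lt_top).ne

theorem setIntegral_lt_of_lt_const {α : Type*} [MeasurableSpace α] {μ : Measure α} {s : Set α}
    {f : α → ℝ} {c : ℝ} (hs : MeasurableSet s) (hμs0 : μ s ≠ 0) (hμs : μ s ≠ ∞)
    (hf : IntegrableOn f s μ) (hlt : ∀ x ∈ s, f x < c) :
    ∫ x in s, f x ∂μ < c * μ.real s := by
  have hc : IntegrableOn (fun _ => c) s μ := integrableOn_const hμs
  have hpos : 0 < ∫ x in s, (c - f x) ∂μ := by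
    rw [← Pi.sub_def, setIntegral_pos_iff_support_of_nonneg_ae ?_ (hc.sub hf),
      inter_eq_right.2 (show s ⊆ Function.support ((fun _ => c) - f) from
        fun x hx => sub_ne_zero.2 (hlt x hx).ne')]
    · exact pos_iff_ne_zero.2 hμs0
    · exact (ae_restrict_iff' hs).2
        (Eventually.of_forall fun x hx => sub_nonneg.2 (hlt x hx).le)
  rw [integral_sub hc hf, setIntegral_const, smul_eq_mul] at hpos
  linarith

section OneDim

variable {μ : Measure ℝ} [NullSingletonClass μ] {E : Set ℝ} {a b : ℝ} {r : ℝ≥0∞} {g : ℝ → ℝ}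

theorem setIntegral_eq_of_disjoint_of_measure_eq (hE : MeasurableSet E) (hEab : E ⊆ Icc a b)
    (hμE : μ E ≠ ∞) (hg : IntegrableOn g E μ)
    (h : ∀ A ⊆ E, MeasurableSet A → μ A = r → ∫ x in A, g x ∂μ = 0)
    {S T : Set ℝ} (hS : MeasurableSet S) (hT : MeasurableSet T) (hSE : S ⊆ E) (hTE : T ⊆ E)
    (hST : Disjoint S T) (hμST : μ S = μ T) (hSr : μ S ≤ r) (hroom : r + μ S ≤ μ E) :
    ∫ x in S, g x ∂μ = ∫ x in T, g x ∂μ := by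
  have hU : MeasurableSet (S ∪ T) := hS.union hT
  have hUE : S ∪ T ⊆ E := union_subset hSE hTE
  have hSfin : μ S ≠ ∞ := ne_top_of_le_ne_top hμE (measure_mono hSE)
  have hroom' : r - μ S ≤ μ (E \ (S ∪ T)) := by
    have hsplit : μ E = μ (E \ (S ∪ T)) + μ S + μ S := by
      rw [← measure_sdiff_add_inter E hU, inter_eq_right.2 hUE, measure_union hST hT, hμST,
        add_assoc]
    exact tsub_le_iff_right.2 (ENNReal.le_of_add_le_add_right hSfin (hroom.trans_eq hsplit))
  obtain ⟨C, hCsub, hC, hμC⟩ := exists_subset_measure_eq (hE.diff hU)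
    (sdiff_subset.trans hEab) (ne_top_of_le_ne_top hμE (measure_mono sdiff_subset)) hroom'
  have hCE : C ⊆ E := hCsub.trans sdiff_subset
  have hSC : Disjoint S C := disjoint_left.2 fun x hxS hxC => (hCsub hxC).2 (.inl hxS)
  have hTC : Disjoint T C := disjoint_left.2 fun x hxT hxC => (hCsub hxC).2 (.inr hxT)
  have hSC0 := h (S ∪ C) (union_subset hSE hCE) (hS.union hC)
    (by rw [measure_union hSC hC, hμC, add_tsub_cancel_of_le hSr])
  have hTC0 := h (T ∪ C) (union_subset hTE hCE) (hT.union hC)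
    (by rw [measure_union hTC hC, hμC, ← hμST, add_tsub_cancel_of_le hSr])
  rw [setIntegral_union hSC hC (hg.mono_set hSE) (hg.mono_set hCE)] at hSC0
  rw [setIntegral_union hTC hC (hg.mono_set hTE) (hg.mono_set hCE)] at hTC0
  linarith

theorem ae_restrict_lt_or_ae_restrict_not_lt (hE : MeasurableSet E) (hEab : E ⊆ Icc a b)
    (hμE : μ E ≠ ∞) (hr0 : r ≠ 0) (hrE : r < μ E) (hg : IntegrableOn g E μ)
    (hgm : Measurable g) (h : ∀ A ⊆ E, MeasurableSet A → μ A = r → ∫ x in A, g x ∂μ = 0)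
    (c : ℝ) :
    (∀ᵐ x ∂μ.restrict E, g x < c) ∨ ∀ᵐ x ∂μ.restrict E, ¬ g x < c := by
  have hlt : MeasurableSet {x | g x < c} := measurableSet_lt hgm measurable_const
  simp only [ae_iff, not_not]
  change μ.restrict E {x | g x < c}ᶜ = 0 ∨ _
  rw [Measure.restrict_apply hlt.compl, Measure.restrict_apply hlt]
  by_contra! ⟨hQ0, hP0⟩
  set P := {x | g x < c} ∩ E
  set Q := {x | g x < c}ᶜ ∩ E
  have hfin : ∀ {A}, A ⊆ E → μ A ≠ ∞ := fun hA => ne_top_of_le_ne_top hμE (measure_mono hA)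
  -- the common measure of `S ⊆ P` and `T ⊆ Q` below, small enough for the swap to apply
  set t := min (μ P) (min (μ Q) (min r (μ E - r)))
  have ht0 : t ≠ 0 := by simp [t, hP0, hQ0, hr0, (tsub_pos_of_lt hrE).ne']
  have htr : t ≤ r := (min_le_right _ _).trans ((min_le_right _ _).trans (min_le_left _ _))
  have hroom : r + t ≤ μ E := by
    calc r + t ≤ r + (μ E - r) := by
          gcongr
          exact (min_le_right _ _).trans ((min_le_right _ _).trans (min_le_right _ _))
      _ = μ E := add_tsub_cancel_of_le hrE.le
  obtain ⟨S, hSP, hS, hμS⟩ := exists_subset_measure_eq (hlt.inter hE)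
    (inter_subset_right.trans hEab) (hfin inter_subset_right) (min_le_left (μ P) _)
  obtain ⟨T, hTQ, hT, hμT⟩ := exists_subset_measure_eq (hlt.compl.inter hE)
    (inter_subset_right.trans hEab) (hfin inter_subset_right)
    ((min_le_right (μ P) _).trans (min_le_left (μ Q) _))
  have hSE : S ⊆ E := hSP.trans inter_subset_right
  have hTE : T ⊆ E := hTQ.trans inter_subset_right
  have hST : Disjoint S T := disjoint_left.2 fun x hxS hxT => (hTQ hxT).1 (hSP hxS).1
  have hswap := setIntegral_eq_of_disjoint_of_measure_eq hE hEab hμE hg h hS hT hSE hTE hST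
    (hμS.trans hμT.symm) (hμS ▸ htr) (hμS ▸ hroom)
  have hSlt : ∫ x in S, g x ∂μ < c * μ.real S :=
    setIntegral_lt_of_lt_const hS (hμS ▸ ht0) (hfin hSE) (hg.mono_set hSE)
      fun x hx => (hSP hx).1
  have hTge : c * μ.real T ≤ ∫ x in T, g x ∂μ :=
    setIntegral_ge_of_const_le_real hT (hfin hTE) (fun x hx => not_lt.1 (hTQ hx).1)
      (hg.mono_set hTE)
  rw [measureReal_def, hμS, ← hμT, ← measureReal_def] at hSlt
  linarith

theorem ae_restrict_eq_zero_of_setIntegral_eq_zero_of_measure_eq (hE : MeasurableSet E)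
    (hEab : E ⊆ Icc a b) (hμE : μ E ≠ ∞) (hr0 : r ≠ 0) (hrE : r < μ E) (hg : IntegrableOn g E μ)
    (h : ∀ A ⊆ E, MeasurableSet A → μ A = r → ∫ x in A, g x ∂μ = 0) :
    ∀ᵐ x ∂μ.restrict E, g x = 0 := by
  set g' := hg.aestronglyMeasurable.mk g
  have hgg' : g =ᵐ[μ.restrict E] g' := hg.aestronglyMeasurable.ae_eq_mk
  have h' : ∀ A ⊆ E, MeasurableSet A → μ A = r → ∫ x in A, g' x ∂μ = 0 :=
    fun A hAE hA hμA => by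
      rw [← integral_congr_ae (ae_restrict_of_ae_restrict_of_subset hAE hgg')]
      exact h A hAE hA hμA
  obtain ⟨c, hc⟩ : ∃ c, g' =ᵐ[μ.restrict E] Function.const ℝ c := by
    refine exists_eventuallyEq_const_of_forall_separating (· ∈ range (Iio : ℝ → Set ℝ)) ?_
    rintro _ ⟨c, rfl⟩
    exact ae_restrict_lt_or_ae_restrict_not_lt hE hEab hμE hr0 hrE (hg.congr hgg')
      hg.aestronglyMeasurable.stronglyMeasurable_mk.measurable h' c
  obtain ⟨A, hAE, hA, hμA⟩ := exists_subset_measure_eq hE hEab hμE hrE.le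
  have hc0 : c = 0 := by
    have := h' A hAE hA hμA
    rw [integral_congr_ae (ae_restrict_of_ae_restrict_of_subset hAE hc)] at this
    simp only [Function.const_apply, setIntegral_const, smul_eq_mul, measureReal_def,
      hμA] at this
    exact (mul_eq_zero.1 this).resolve_left
      (ENNReal.toReal_ne_zero.2 ⟨hr0, ne_top_of_lt hrE⟩)
  filter_upwards [hgg', hc] with x h1 h2
  rw [h1, h2, hc0, Function.const_apply]

end OneDim

theorem exists_setIntegral_univ_pi_update_eq {m : ℕ} {f : (Fin m → ℝ) → ℝ} (i : Fin m)
    {A : Fin m → Set ℝ} {S : Set ℝ} (hf : IntegrableOn f (univ.pi (Function.update A i S))) :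
    ∃ g : ℝ → ℝ, IntegrableOn g S ∧ ∀ B ⊆ S,
      ∫ x in univ.pi (Function.update A i B), f x = ∫ t in B, g t := by
  obtain ⟨n, rfl⟩ := Nat.exists_eq_add_one_of_ne_zero i.pos.ne'
  set e := (MeasurableEquiv.piFinSuccAbove (fun _ => ℝ) i).symm
  have he : MeasurePreserving e (volume.prod volume) volume := by
    rw [← Measure.volume_eq_prod]
    exact (volume_preserving_piFinSuccAbove (fun _ => ℝ) i).symm _
  set T : Set (Fin n → ℝ) := univ.pi fun j => A (i.succAbove j)
  have hpre : ∀ B, e ⁻¹' univ.pi (Function.update A i B) = B ×ˢ T := fun B => by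
    ext ⟨t, y⟩
    simp [e, T, Fin.forall_iff_succAbove i, MeasurableEquiv.piFinSuccAbove_symm_apply]
  have hF : IntegrableOn (f ∘ e) (S ×ˢ T) (volume.prod volume) := by
    rwa [← hpre, he.integrableOn_comp_preimage e.measurableEmbedding]
  refine ⟨fun t => ∫ y in T, f (e (t, y)), ?_, fun B hBS => ?_⟩
  · rw [IntegrableOn, ← Measure.prod_restrict] at hF
    exact hF.integral_prod_left
  · rw [← he.setIntegral_preimage_emb e.measurableEmbedding, hpre]
    exact setIntegral_prod (f ∘ e) (hF.mono_set (prod_mono hBS subset_rfl))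

theorem setIntegral_univ_pi_eq_zero_of_forall_measure_eq {m : ℕ} {f : (Fin m → ℝ) → ℝ}
    {a b : ℝ} {r : ℝ≥0∞} (hr0 : r ≠ 0) (P : (Fin m → Set ℝ) → Prop)
    (hroom : ∀ A, P A → ∀ i, ∃ E, MeasurableSet E ∧ E ⊆ Icc a b ∧ r < volume E ∧
      A i ⊆ E ∧
      IntegrableOn f (univ.pi (Function.update A i E)) ∧
      ∀ B ⊆ E, MeasurableSet B → volume B = r → P (Function.update A i B))
    (H : ∀ A, P A → (∀ i, volume (A i) = r) → ∫ x in univ.pi A, f x = 0)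
    (A : Fin m → Set ℝ) (hA : P A) :
    ∫ x in univ.pi A, f x = 0 := by
  suffices ∀ s : Finset (Fin m), ∀ A, P A → (∀ i ∉ s, volume (A i) = r) →
      ∫ x in univ.pi A, f x = 0 from this Finset.univ A hA (by simp)
  intro s
  induction s using Finset.induction with
  | empty => exact fun A hA hAr => H A hA fun i => hAr i (Finset.notMem_empty i)
  | insert i s _ ih =>
    intro A hA hAr
    obtain ⟨E, hE, hEab, hrE, hAE, hfE, hupd⟩ := hroom A hA i
    obtain ⟨g, hg, hfg⟩ := exists_setIntegral_univ_pi_update_eq i hfE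
    have hg0 : ∀ᵐ t ∂volume.restrict E, g t = 0 := by
      refine ae_restrict_eq_zero_of_setIntegral_eq_zero_of_measure_eq hE hEab
        (ne_top_of_le_ne_top (by simp) (measure_mono hEab)) hr0 hrE hg
        fun B hBE hB hμB => ?_
      rw [← hfg B hBE]
      refine ih _ (hupd B hBE hB hμB) fun j hj => ?_
      rcases eq_or_ne j i with rfl | hji
      · simpa using hμB
      · rw [Function.update_of_ne hji]
        exact hAr j (by simp [hji, hj])
    rw [← Function.update_eq_self i A, hfg (A i) hAE]
    exact integral_eq_zero_of_ae (ae_restrict_of_ae_restrict_of_subset hAE hg0)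

theorem integrableOn_univ_pi_update {m : ℕ} {f : (Fin m → ℝ) → ℝ} {I A : Fin m → Set ℝ}
    (hf : IntegrableOn f (univ.pi I)) (hAI : ∀ j, A j ⊆ I j) {i : Fin m} {B : Set ℝ}
    (hBI : B ⊆ I i) : IntegrableOn f (univ.pi (Function.update A i B)) :=
  hf.mono_set <| pi_mono fun j _ => (Function.forall_update_iff A fun j s => s ⊆ I j).2
    ⟨hBI, fun j _ => hAI j⟩ j

theorem setIntegral_univ_pi_eq_zero_of_forall_measure_eq_of_lt_one {m : ℕ}
    {f : (Fin m → ℝ) → ℝ} {r : ℝ≥0∞} (hr0 : r ≠ 0) (hr1 : r < 1)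
    (hf : IntegrableOn f (univ.pi fun _ => Icc (0 : ℝ) 1))
    (H : ∀ A : Fin m → Set ℝ, (∀ i, MeasurableSet (A i)) → (∀ i, A i ⊆ Icc 0 1) →
      (∀ i, volume (A i) = r) → ∫ x in univ.pi A, f x = 0)
    (A : Fin m → Set ℝ) (hA : ∀ i, MeasurableSet (A i)) (hA01 : ∀ i, A i ⊆ Icc 0 1) :
    ∫ x in univ.pi A, f x = 0 := by
  refine setIntegral_univ_pi_eq_zero_of_forall_measure_eq (a := 0) (b := 1) hr0
    (fun A => (∀ i, MeasurableSet (A i)) ∧ ∀ i, A i ⊆ Icc 0 1) ?_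
    (fun A hA => H A hA.1 hA.2) A ⟨hA, hA01⟩
  rintro A ⟨hA, hA01⟩ i
  refine ⟨Icc 0 1, measurableSet_Icc, subset_rfl, by simpa using hr1, hA01 i,
    integrableOn_univ_pi_update hf hA01 subset_rfl, fun B hB01 hB _ => ⟨?_, ?_⟩⟩
  · exact (Function.forall_update_iff A fun _ s => MeasurableSet s).2 ⟨hB, fun j _ => hA j⟩
  · exact (Function.forall_update_iff A fun _ s => s ⊆ Icc 0 1).2 ⟨hB01, fun j _ => hA01 j⟩

theorem lt_volume_Icc_sdiff_biUnion_erase {m : ℕ} {r : ℝ≥0∞} {A : Fin m → Set ℝ}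
    (hAr : ∀ j, volume (A j) ≤ r) (hmr : m * r < 1) (i : Fin m) :
    r < volume (Icc (0 : ℝ) 1 \ ⋃ j ∈ Finset.univ.erase i, A j) := by
  set U := ⋃ j ∈ Finset.univ.erase i, A j
  have hU : r + volume U < 1 := calc
    r + volume U ≤ r + ∑ j ∈ Finset.univ.erase i, r := by
      gcongr
      exact (measure_biUnion_finset_le _ _).trans (Finset.sum_le_sum fun j _ => hAr j)
    _ = ∑ _j : Fin m, r := Finset.add_sum_erase _ (fun _ => r) (Finset.mem_univ i)
    _ = m * r := by simp
    _ < 1 := hmr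
  calc r < 1 - volume U := lt_tsub_iff_right.2 hU
    _ = volume (Icc (0 : ℝ) 1) - volume U := by simp
    _ ≤ volume (Icc 0 1 \ U) := le_measure_sdiff

theorem setIntegral_univ_pi_eq_zero_of_forall_disjoint_measure_eq {m : ℕ}
    {f : (Fin m → ℝ) → ℝ} {r : ℝ≥0∞} (hr0 : r ≠ 0) (hmr : m * r < 1)
    (hf : IntegrableOn f (univ.pi fun _ => Icc (0 : ℝ) 1))
    (H : ∀ A : Fin m → Set ℝ, (∀ i, MeasurableSet (A i)) → (∀ i, A i ⊆ Icc 0 1) →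
      (∀ i j, i ≠ j → Disjoint (A i) (A j)) → (∀ i, volume (A i) = r) →
      ∫ x in univ.pi A, f x = 0)
    (A : Fin m → Set ℝ) (hA : ∀ i, MeasurableSet (A i)) (hA01 : ∀ i, A i ⊆ Icc 0 1)
    (hAd : ∀ i j, i ≠ j → Disjoint (A i) (A j)) (hAr : ∀ i, volume (A i) ≤ r) :
    ∫ x in univ.pi A, f x = 0 := by
  refine setIntegral_univ_pi_eq_zero_of_forall_measure_eq (a := 0) (b := 1) hr0
    (fun A => (∀ i, MeasurableSet (A i)) ∧ (∀ i, A i ⊆ Icc 0 1) ∧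
      (∀ i j, i ≠ j → Disjoint (A i) (A j)) ∧ ∀ i, volume (A i) ≤ r) ?_
    (fun A hA => H A hA.1 hA.2.1 hA.2.2.1) A ⟨hA, hA01, hAd, hAr⟩
  rintro A ⟨hA, hA01, hAd, hAr⟩ i
  set E := Icc 0 1 \ ⋃ j ∈ Finset.univ.erase i, A j
  have hAiE : A i ⊆ E := fun x hx => ⟨hA01 i hx, by
    simpa using fun j hji hxj => disjoint_left.1 (hAd i j (Ne.symm hji)) hx hxj⟩
  have hEd : ∀ j ≠ i, Disjoint E (A j) := fun j hji => disjoint_left.2 fun x hxE hxA =>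
    hxE.2 (mem_biUnion (Finset.mem_erase.2 ⟨hji, Finset.mem_univ j⟩) hxA)
  refine ⟨E, measurableSet_Icc.diff (Finset.measurableSet_biUnion _ fun j _ => hA j),
    sdiff_subset, lt_volume_Icc_sdiff_biUnion_erase hAr hmr i, hAiE,
    integrableOn_univ_pi_update hf hA01 sdiff_subset, fun B hBE hB hμB => ⟨?_, ?_, ?_, ?_⟩⟩
  · exact (Function.forall_update_iff A fun _ s => MeasurableSet s).2 ⟨hB, fun j _ => hA j⟩
  · exact (Function.forall_update_iff A fun _ s => s ⊆ Icc 0 1).2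
      ⟨hBE.trans sdiff_subset, fun j _ => hA01 j⟩
  · intro j k hjk
    rcases eq_or_ne j i with rfl | hj
    · rw [Function.update_self, Function.update_of_ne hjk.symm]
      exact (hEd k hjk.symm).mono_left hBE
    rcases eq_or_ne k i with rfl | hk
    · rw [Function.update_self, Function.update_of_ne hj]
      exact ((hEd j hj).mono_left hBE).symm
    rw [Function.update_of_ne hj, Function.update_of_ne hk]
    exact hAd j k hjk
  · exact (Function.forall_update_iff A fun _ s => volume s ≤ r).2
      ⟨hμB.le, fun j _ => hAr j⟩

theorem ae_eq_zero_of_forall_setIntegral_univ_pi_eq_zero {ι : Type*} [Finite ι]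
    {α : ι → Type*} [∀ i, MeasurableSpace (α i)] {μ : Measure (∀ i, α i)}
    {E : Type*} [NormedAddCommGroup E] [NormedSpace ℝ E] [CompleteSpace E]
    {f : (∀ i, α i) → E}
    (hf : Integrable f μ)
    (h : ∀ B : ∀ i, Set (α i), (∀ i, MeasurableSet (B i)) → ∫ x in univ.pi B, f x ∂μ = 0) :
    f =ᵐ[μ] 0 := by
  suffices ∀ s, MeasurableSet s → ∫ x in s, f x ∂μ = 0 from
    hf.ae_eq_zero_of_forall_setIntegral_eq_zero fun s hs _ => this s hs
  have huniv : ∫ x, f x ∂μ = 0 := by simpa using h (fun _ => univ) fun _ => .univ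
  intro s hs
  induction s, hs using
    MeasurableSpace.induction_on_inter (generateFrom_pi (α := α)).symm isPiSystem_pi with
  | empty => simp
  | basic s hs =>
    obtain ⟨B, hB, rfl⟩ := hs
    exact h B fun i => hB i (mem_univ i)
  | compl s hs ihs => simpa [ihs, huniv] using integral_add_compl hs hf
  | iUnion g g_disj g_meas hg => simp [integral_iUnion g_meas g_disj hf.integrableOn, hg]

theorem ae_restrict_univ_pi_eq_zero_of_forall_setIntegral_eq_zero {ι : Type*} [Finite ι]
    {α : ι → Type*} [∀ i, MeasurableSpace (α i)] {μ : Measure (∀ i, α i)}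
    {E : Type*} [NormedAddCommGroup E] [NormedSpace ℝ E] [CompleteSpace E]
    {f : (∀ i, α i) → E}
    {I : ∀ i, Set (α i)} (hI : ∀ i, MeasurableSet (I i)) (hf : IntegrableOn f (univ.pi I) μ)
    (h : ∀ A : ∀ i, Set (α i), (∀ i, MeasurableSet (A i)) → (∀ i, A i ⊆ I i) →
      ∫ x in univ.pi A, f x ∂μ = 0) :
    ∀ᵐ x ∂μ.restrict (univ.pi I), f x = 0 :=
  ae_eq_zero_of_forall_setIntegral_univ_pi_eq_zero hf fun B hB => by
    rw [Measure.restrict_restrict (.univ_pi hB), ← pi_inter_distrib]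
    exact h _ (fun i => (hB i).inter (hI i)) fun i => inter_subset_right

theorem ae_restrict_of_forall_mem_nhds {X : Type*} [TopologicalSpace X]
    [SecondCountableTopology X] [MeasurableSpace X] {μ : Measure X} {D : Set X} {p : X → Prop}
    (h : ∀ x ∈ D, ∃ U ∈ 𝓝 x, ∀ᵐ y ∂μ.restrict U, p y) : ∀ᵐ x ∂μ.restrict D, p x := by
  choose! U hU hpU using h
  obtain ⟨t, htD, htc, hcover⟩ := TopologicalSpace.countable_cover_nhdsWithin
    fun x hx => mem_nhdsWithin_of_mem_nhds (hU x hx)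
  exact ae_restrict_of_ae_restrict_of_subset hcover
    ((ae_restrict_biUnion_iff _ htc _).2 fun x hx => hpU x (htD hx))

theorem volume_setOf_apply_eq_apply {ι : Type*} [Fintype ι] {i j : ι} (hij : i ≠ j) :
    volume {x : ι → ℝ | x i = x j} = 0 := by
  classical
  have hker : {x : ι → ℝ | x i = x j} =
      LinearMap.ker (LinearMap.proj (R := ℝ) (φ := fun _ : ι => ℝ) i - LinearMap.proj j) := by
    ext x
    simp [sub_eq_zero]
  rw [hker]
  refine Measure.addHaar_submodule _ _ fun htop => ?_
  have := htop ▸ Submodule.mem_top (x := Pi.single i (1 : ℝ))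
  simp [Pi.single_eq_of_ne hij.symm] at this

theorem ae_injective {ι : Type*} [Fintype ι] : ∀ᵐ x : ι → ℝ, Function.Injective x := by
  have : ∀ᵐ x : ι → ℝ, ∀ i j, i ≠ j → x i ≠ x j := by
    refine ae_all_iff.2 fun i => ae_all_iff.2 fun j => ?_
    rcases eq_or_ne i j with rfl | hij
    · exact Eventually.of_forall fun _ h => absurd rfl h
    · exact (measure_eq_zero_iff_ae_notMem.1 (volume_setOf_apply_eq_apply hij)).mono
        fun x hx _ => hx
  exact this.mono fun x hx i j hxij => by_contra fun h => hx i j h hxij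

theorem univ_pi_Icc_ae_eq_univ_pi_Ioo_inter_injective {ι : Type*} [Fintype ι] :
    (univ.pi fun _ : ι => Icc (0 : ℝ) 1) =ᵐ[volume]
      ((univ.pi fun _ => Ioo (0 : ℝ) 1) ∩ {x | Function.Injective x} : Set (ι → ℝ)) := by
  have hinj : {x : ι → ℝ | Function.Injective x} =ᵐ[volume] (univ : Set (ι → ℝ)) :=
    eventuallyEq_univ.2 ae_injective
  refine (inter_ae_eq_left_of_ae_eq_univ hinj).trans ?_ |>.symm
  rw [pi_univ_Icc]
  exact Measure.univ_pi_Ioo_ae_eq_Icc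

theorem exists_pos_ball_subset_Icc_disjoint {ι : Type*} [Finite ι] {x : ι → ℝ}
    (hx : ∀ i, x i ∈ Ioo 0 1) (hinj : Function.Injective x) {γ : ℝ} (hγ : 0 < γ) :
    ∃ δ > 0, (∀ i, ball (x i) δ ⊆ Icc 0 1) ∧
      (∀ i j, i ≠ j → Disjoint (ball (x i) δ) (ball (x j) δ)) ∧ 2 * δ ≤ γ := by
  have hIcc : ∀ᶠ δ in 𝓝 (0 : ℝ), ∀ i, δ ≤ x i ∧ δ ≤ 1 - x i := eventually_all.2 fun i =>
    (eventually_le_nhds (hx i).1).and (eventually_le_nhds (sub_pos.2 (hx i).2))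
  have hgap : ∀ᶠ δ in 𝓝 (0 : ℝ), ∀ i j, i ≠ j → δ ≤ dist (x i) (x j) / 2 :=
    eventually_all.2 fun i => eventually_all.2 fun j => by
      rcases eq_or_ne i j with rfl | hij
      · exact Eventually.of_forall fun _ h => absurd rfl h
      · exact (eventually_le_nhds (half_pos (dist_pos.2 (hinj.ne hij)))).mono fun _ h _ => h
  obtain ⟨δ, ⟨hδIcc, hδgap, hδγ⟩, hδ⟩ :=
    (((hIcc.and (hgap.and (eventually_le_nhds (half_pos hγ)))).filter_mono
      nhdsWithin_le_nhds).and (self_mem_nhdsWithin (s := Ioi 0))).exists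
  refine ⟨δ, hδ, fun i y hy => ?_, fun i j hij => ball_disjoint_ball ?_, by linarith⟩
  · rw [Real.ball_eq_Ioo] at hy
    exact ⟨by linarith [hy.1, (hδIcc i).1], by linarith [hy.2, (hδIcc i).2]⟩
  · linarith [hδgap i j hij]

theorem ae_restrict_univ_pi_Icc_of_forall_disjoint {ι : Type*} [Fintype ι]
    {p : (ι → ℝ) → Prop} {γ : ℝ} (hγ : 0 < γ)
    (h : ∀ I : ι → Set ℝ, (∀ i, MeasurableSet (I i)) → (∀ i, I i ⊆ Icc 0 1) →
      (∀ i j, i ≠ j → Disjoint (I i) (I j)) → (∀ i, volume (I i) ≤ ENNReal.ofReal γ) →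
      ∀ᵐ x ∂volume.restrict (univ.pi I), p x) :
    ∀ᵐ x ∂volume.restrict (univ.pi fun _ => Icc (0 : ℝ) 1), p x := by
  rw [Measure.restrict_congr_set univ_pi_Icc_ae_eq_univ_pi_Ioo_inter_injective]
  refine ae_restrict_of_forall_mem_nhds fun x ⟨hx, hinj⟩ => ?_
  obtain ⟨δ, hδ, h01, hdisj, hδγ⟩ :=
    exists_pos_ball_subset_Icc_disjoint (fun i => hx i (mem_univ i)) hinj hγ
  refine ⟨ball x δ, ball_mem_nhds x hδ, ?_⟩
  rw [ball_pi x hδ]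
  exact h _ (fun _ => measurableSet_ball) h01 hdisj fun i => by
    rw [Real.volume_ball]
    exact ENNReal.ofReal_le_ofReal hδγ

theorem stmt10_general (m : ℕ) (γ : ℝ) (hγ0 : 0 < γ) (hγ1 : γ < 1)
    (f : (Fin m → ℝ) → ℝ)
    (hf : IntegrableOn f (Set.univ.pi fun _ : Fin m => Set.Icc (0 : ℝ) 1) volume) :
    ((∀ A : Fin m → Set ℝ, (∀ i, MeasurableSet (A i)) →
        (∀ i, A i ⊆ Set.Icc (0 : ℝ) 1) →
        (∀ i, volume (A i) = ENNReal.ofReal γ) →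
        ∫ x in Set.univ.pi A, f x = 0) →
      ∀ᵐ x ∂((volume : Measure (Fin m → ℝ)).restrict
          (Set.univ.pi fun _ : Fin m => Set.Icc (0 : ℝ) 1)), f x = 0)
    ∧ (γ < 1 / (m : ℝ) →
      (∀ A : Fin m → Set ℝ, (∀ i, MeasurableSet (A i)) →
        (∀ i, A i ⊆ Set.Icc (0 : ℝ) 1) →
        (∀ i j, i ≠ j → Disjoint (A i) (A j)) →
        (∀ i, volume (A i) = ENNReal.ofReal γ) →
        ∫ x in Set.univ.pi A, f x = 0) →
      ∀ᵐ x ∂((volume : Measure (Fin m → ℝ)).restrict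
          (Set.univ.pi fun _ : Fin m => Set.Icc (0 : ℝ) 1)), f x = 0) := by
  have hr0 : ENNReal.ofReal γ ≠ 0 := (ENNReal.ofReal_pos.2 hγ0).ne'
  refine ⟨fun H => ?_, fun hγm H => ?_⟩
  · exact ae_restrict_univ_pi_eq_zero_of_forall_setIntegral_eq_zero
      (fun _ => measurableSet_Icc) hf fun A hA hA01 =>
        setIntegral_univ_pi_eq_zero_of_forall_measure_eq_of_lt_one hr0
          (ENNReal.ofReal_lt_one.2 hγ1) hf H A hA hA01
  · have hmr : (m : ℝ≥0∞) * ENNReal.ofReal γ < 1 := by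
      have : (m : ℝ) * γ < 1 := by
        rcases m.eq_zero_or_pos with rfl | hm
        · simp
        · rwa [lt_div_iff₀ (by positivity), mul_comm] at hγm
      rwa [← ENNReal.ofReal_natCast, ← ENNReal.ofReal_mul (by positivity),
        ENNReal.ofReal_lt_one]
    refine ae_restrict_univ_pi_Icc_of_forall_disjoint hγ0 fun I hI hI01 hId hIγ => ?_
    refine ae_restrict_univ_pi_eq_zero_of_forall_setIntegral_eq_zero hI
      (hf.mono_set (pi_mono fun i _ => hI01 i)) fun A hA hAI => ?_
    exact setIntegral_univ_pi_eq_zero_of_forall_disjoint_measure_eq hr0 hmr hf H A hA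
      (fun i => (hAI i).trans (hI01 i)) (fun i j hij => (hId i j hij).mono (hAI i) (hAI j))
      fun i => (measure_mono (hAI i)).trans (hIγ i)

/-- **Lemma.** Let `γ ∈ (0,1)` and let `f : [0,1]^m → ℝ` be integrable. If
`∫_{A₁ × ⋯ × A_m} f = 0` for all `m`-tuples of measurable subsets of `[0,1]` with
`λ(A₁) = ⋯ = λ(A_m) = γ`, then `f = 0` a.e. on `[0,1]^m`. Moreover, if `γ < 1/m`,
the same conclusion holds assuming this only for pairwise disjoint such tuples. -/
theorem stmt10 (m : ℕ) (hm : 1 ≤ m) (γ : ℝ) (hγ0 : 0 < γ) (hγ1 : γ < 1)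
    (f : (Fin m → ℝ) → ℝ)
    (hf : IntegrableOn f (Set.univ.pi fun _ : Fin m => Set.Icc (0 : ℝ) 1) volume) :
    ((∀ A : Fin m → Set ℝ, (∀ i, MeasurableSet (A i)) →
        (∀ i, A i ⊆ Set.Icc (0 : ℝ) 1) →
        (∀ i, volume (A i) = ENNReal.ofReal γ) →
        ∫ x in Set.univ.pi A, f x = 0) →
      ∀ᵐ x ∂((volume : Measure (Fin m → ℝ)).restrict
          (Set.univ.pi fun _ : Fin m => Set.Icc (0 : ℝ) 1)), f x = 0)
    ∧ (γ < 1 / (m : ℝ) →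
      (∀ A : Fin m → Set ℝ, (∀ i, MeasurableSet (A i)) →
        (∀ i, A i ⊆ Set.Icc (0 : ℝ) 1) →
        (∀ i j, i ≠ j → Disjoint (A i) (A j)) →
        (∀ i, volume (A i) = ENNReal.ofReal γ) →
        ∫ x in Set.univ.pi A, f x = 0) →
      ∀ᵐ x ∂((volume : Measure (Fin m → ℝ)).restrict
          (Set.univ.pi fun _ : Fin m => Set.Icc (0 : ℝ) 1)), f x = 0) :=
  stmt10_general m γ hγ0 hγ1 f hf
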